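/- For submodules A, B of a module M, SG.dim(A + B) ≤ SG.dim A + SG.dim B. -/

import Mathlib

/-- Goldie (uniform) dimension: supremum of the number of independent nonzero submodules. -/
noncomputable def goldieDim (R M : Type*) [Ring R] [AddCommGroup M] [Module R M] : ℕ∞ :=
  ⨆ (n : ℕ) (_ : ∃ f : Fin n → Submodule R M, (∀ i, f i ≠ ⊥) ∧ iSupIndep f), (n : ℕ∞)

/-- Strong Goldie dimension: supremum of Goldie dimensions of all quotients. -/
noncomputable def sgoldieDim (R M : Type*) [Ring R] [AddCommGroup M] [Module R M] : ℕ∞ :=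
  ⨆ K : Submodule R M, goldieDim R (M ⧸ K)

section helpers

variable {R M N : Type*} [Ring R] [AddCommGroup M] [Module R M]
  [AddCommGroup N] [Module R N]

lemma le_goldieDim {n : ℕ} (f : Fin n → Submodule R M) (h1 : ∀ i, f i ≠ ⊥)
    (h2 : iSupIndep f) : (n : ℕ∞) ≤ goldieDim R M :=
  le_iSup_of_le n (le_iSup_of_le ⟨f, h1, h2⟩ le_rfl)

lemma goldieDim_le {c : ℕ∞}
    (h : ∀ n (f : Fin n → Submodule R M), (∀ i, f i ≠ ⊥) → iSupIndep f → (n : ℕ∞) ≤ c) :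
    goldieDim R M ≤ c :=
  iSup_le fun n => iSup_le fun ⟨f, h1, h2⟩ => h n f h1 h2

lemma submap_eq_bot_iff (f : M →ₗ[R] N) (p : Submodule R M) :
    Submodule.map f p = ⊥ ↔ p ≤ LinearMap.ker f := by
  rw [← le_bot_iff, Submodule.map_le_iff_le_comap, Submodule.comap_bot]

lemma goldieDim_le_of_injective (f : M →ₗ[R] N) (hf : Function.Injective f) :
    goldieDim R M ≤ goldieDim R N := by
  refine goldieDim_le fun n g h1 h2 => le_goldieDim (fun i => Submodule.map f (g i)) ?_ ?_
  · intro i hbot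
    exact h1 i (le_bot_iff.mp (by
      rw [submap_eq_bot_iff] at hbot
      simpa [LinearMap.ker_eq_bot.mpr hf] using hbot))
  · intro i
    rw [disjoint_iff]
    have : (⨆ (j : Fin n) (_ : j ≠ i), Submodule.map f (g j))
        = Submodule.map f (⨆ (j : Fin n) (_ : j ≠ i), g j) := by
      simp [Submodule.map_iSup]
    rw [this, ← Submodule.map_inf f hf, disjoint_iff.mp (h2 i), Submodule.map_bot]

lemma goldieDim_congr (e : M ≃ₗ[R] N) : goldieDim R M = goldieDim R N :=
  le_antisymm (goldieDim_le_of_injective e.toLinearMap e.injective)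
    (goldieDim_le_of_injective e.symm.toLinearMap e.symm.injective)

lemma le_goldieDim_submodule {n : ℕ} (p : Submodule R M) (f : Fin n → Submodule R M)
    (h1 : ∀ i, f i ≠ ⊥) (h2 : iSupIndep f) (h3 : ∀ i, f i ≤ p) :
    (n : ℕ∞) ≤ goldieDim R ↥p := by
  refine le_goldieDim (fun i => Submodule.comap p.subtype (f i)) ?_ ?_
  · intro i hbot
    apply h1 i
    have := congrArg (Submodule.map p.subtype) hbot
    rw [Submodule.map_comap_subtype, Submodule.map_bot, inf_eq_right.mpr (h3 i)] at this
    exact this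
  · intro i
    have key : ∀ j, Submodule.map p.subtype (Submodule.comap p.subtype (f j)) = f j := fun j => by
      rw [Submodule.map_comap_subtype, inf_eq_right.mpr (h3 j)]
    rw [disjoint_iff]
    apply Submodule.map_injective_of_injective p.injective_subtype
    rw [Submodule.map_inf _ p.injective_subtype, Submodule.map_bot]
    simp only [Submodule.map_iSup, key]
    exact disjoint_iff.mp (h2 i)

lemma goldieDim_le_sgoldieDim : goldieDim R M ≤ sgoldieDim R M := by
  have := goldieDim_congr (Submodule.quotEquivOfEqBot (⊥ : Submodule R M) rfl)
  exact le_iSup_of_le ⊥ this.ge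

lemma sgoldieDim_le_of_surjective (f : M →ₗ[R] N) (hf : Function.Surjective f) :
    sgoldieDim R N ≤ sgoldieDim R M := by
  refine iSup_le fun K => ?_
  have hs : Function.Surjective (K.mkQ.comp f) := (Submodule.mkQ_surjective K).comp hf
  have e := (K.mkQ.comp f).quotKerEquivOfSurjective hs
  rw [← goldieDim_congr e]
  exact le_iSup_of_le _ le_rfl

end helpers

section core

variable {R M N : Type*} [Ring R] [AddCommGroup M] [Module R M]
  [AddCommGroup N] [Module R N]

lemma submodule_map_finset_sup {ι : Type*} (q : M →ₗ[R] N) (s : Finset ι) (f : ι → Submodule R M) :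
    Submodule.map q (s.sup f) = s.sup fun i => Submodule.map q (f i) := by
  classical
  induction s using Finset.induction_on with
  | empty => simp
  | insert _ _ ha ih => rw [Finset.sup_insert, Finset.sup_insert, Submodule.map_sup, ih]

lemma supIndep_insert' {ι : Type*} [DecidableEq ι] {g : ι → Submodule R M} {T : Finset ι}
    (hT : T.SupIndep g) {i : ι} (hi : i ∉ T) (hd : Disjoint (g i) (T.sup g)) :
    (insert i T).SupIndep g := by
  rw [Finset.supIndep_iff_disjoint_erase]
  intro k hk
  rcases Finset.mem_insert.mp hk with rfl | hkT
  · rw [Finset.erase_insert hi]; exact hd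
  · have hki : k ≠ i := by rintro rfl; exact hi hkT
    have d1 : Disjoint (g k) ((T.erase k).sup g) :=
      Finset.supIndep_iff_disjoint_erase.mp hT k hkT
    have hsum : g k ⊔ (T.erase k).sup g = T.sup g := by
      rw [← Finset.sup_insert, Finset.insert_erase hkT]
    have d2 : Disjoint (g k ⊔ (T.erase k).sup g) (g i) := by rw [hsum]; exact hd.symm
    have := d1.disjoint_sup_right_of_disjoint_sup_left d2
    rw [Finset.erase_insert_of_ne hki.symm, Finset.sup_insert]
    rwa [sup_comm] at this

lemma disjoint_map_mkQ (C X Y : Submodule R M) (h : X ⊓ (Y ⊔ C) = ⊥) :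
    Disjoint (Submodule.map C.mkQ X) (Submodule.map C.mkQ Y) := by
  rw [disjoint_iff]
  apply Submodule.comap_injective_of_surjective (Submodule.mkQ_surjective C)
  rw [Submodule.comap_inf, Submodule.comap_map_eq, Submodule.comap_map_eq,
    Submodule.comap_bot, Submodule.ker_mkQ]
  have key := inf_sup_assoc_of_le (α := Submodule R M) (x := Y ⊔ C) X
    (z := C) le_sup_right
  rw [inf_comm (X ⊔ C) (Y ⊔ C), ← key, inf_comm (Y ⊔ C) X, h, bot_sup_eq]

lemma core_sum_le {A B : Submodule R M} (hAB : A ⊔ B = ⊤) :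
    goldieDim R M ≤ sgoldieDim R ↥A + sgoldieDim R ↥B := by
  classical
  refine goldieDim_le fun n f h1 h2 => ?_
  set g : Fin n → Submodule R (M ⧸ A) := fun i => Submodule.map A.mkQ (f i) with hg
  set P : Finset (Fin n) → Prop := fun T => T.SupIndep g ∧ ∀ i ∈ T, g i ≠ ⊥ with hP
  have hSne : (Finset.univ.filter P).Nonempty :=
    ⟨∅, Finset.mem_filter.mpr ⟨Finset.mem_univ _, Finset.supIndep_empty g, by simp⟩⟩
  obtain ⟨T, hTmem, hTmax⟩ := Finset.exists_max_image _ Finset.card hSne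
  obtain ⟨-, hTind, hTne⟩ := Finset.mem_filter.mp hTmem
  set W : Submodule R M := T.sup f with hW
  set V : Fin n → Submodule R M := fun i => f i ⊓ (A ⊔ W) with hV
  have hWle : ∀ i ∉ T, W ≤ ⨆ (j : Fin n) (_ : j ≠ i), f j := by
    intro i hi
    refine Finset.sup_le fun j hj => ?_
    exact le_iSup_of_le j (le_iSup_of_le (fun h => hi (h ▸ hj)) le_rfl)
  have hmapW : Submodule.map A.mkQ W = T.sup g := submodule_map_finset_sup A.mkQ T f
  -- every i outside T has V i ≠ ⊥
  have hVne : ∀ i ∉ T, V i ≠ ⊥ := by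
    intro i hi hVi
    have hVi' : f i ⊓ (A ⊔ W) = ⊥ := hVi
    have hgi : g i ≠ ⊥ := by
      intro hb
      have : f i ≤ A := by
        have := (submap_eq_bot_iff A.mkQ (f i)).mp hb
        rwa [Submodule.ker_mkQ] at this
      apply h1 i
      rw [← hVi']
      exact (inf_eq_left.mpr (this.trans le_sup_left)).symm
    have hdis : Disjoint (g i) (T.sup g) := by
      rw [← hmapW]
      exact disjoint_map_mkQ A (f i) W (by rwa [sup_comm W A])
    have hins : P (insert i T) := by
      refine ⟨supIndep_insert' hTind hi hdis, ?_⟩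
      intro j hj
      rcases Finset.mem_insert.mp hj with rfl | hj
      exacts [hgi, hTne j hj]
    have hle := hTmax (insert i T) (Finset.mem_filter.mpr ⟨Finset.mem_univ _, hins⟩)
    rw [Finset.card_insert_of_notMem hi] at hle
    omega
  -- B side: T.card many independent nonzero submodules in M ⧸ A
  have hB : (T.card : ℕ∞) ≤ sgoldieDim R ↥B := by
    have hfam : (T.card : ℕ∞) ≤ goldieDim R (M ⧸ A) := by
      refine le_goldieDim ((fun i : T => g i) ∘ T.equivFin.symm) ?_ ?_
      · intro i; exact hTne _ (Subtype.mem _)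
      · exact (iSupIndep_comp_coe_iff_supIndep.mpr hTind).comp T.equivFin.symm.injective
    have hsurj : Function.Surjective (A.mkQ.comp B.subtype) := by
      rw [← LinearMap.range_eq_top, LinearMap.range_comp, Submodule.range_subtype,
        Submodule.map_mkQ_eq_top]
      exact hAB
    exact hfam.trans (goldieDim_le_sgoldieDim.trans (sgoldieDim_le_of_surjective _ hsurj))
  -- A side
  have hfW : ∀ i ∉ T, V i ⊓ W = ⊥ := by
    intro i hi
    have hd : Disjoint (f i) W := (h2 i).mono_right (hWle i hi)
    exact le_bot_iff.mp ((inf_le_inf_right W inf_le_left).trans (disjoint_iff.mp hd).le)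
  have himg_ne : ∀ i ∉ T, Submodule.map W.mkQ (V i) ≠ ⊥ := by
    intro i hi hb
    have : V i ≤ W := by
      have := (submap_eq_bot_iff W.mkQ (V i)).mp hb
      rwa [Submodule.ker_mkQ] at this
    exact hVne i hi (by rw [← hfW i hi]; exact (inf_eq_left.mpr this).symm)
  have himg_le : ∀ i ∉ T, Submodule.map W.mkQ (V i) ≤ Submodule.map W.mkQ A := by
    intro i hi
    have h0 : Submodule.map W.mkQ W = ⊥ :=
      (submap_eq_bot_iff W.mkQ W).mpr (by rw [Submodule.ker_mkQ])
    calc Submodule.map W.mkQ (V i) ≤ Submodule.map W.mkQ (A ⊔ W) :=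
          Submodule.map_mono inf_le_right
      _ = Submodule.map W.mkQ A ⊔ Submodule.map W.mkQ W := Submodule.map_sup _ _ _
      _ = Submodule.map W.mkQ A := by rw [h0, sup_bot_eq]
  have himg_ind : iSupIndep (fun i : ↥(Tᶜ : Finset (Fin n)) =>
      Submodule.map W.mkQ (V i)) := by
    intro i
    have hiT : (i : Fin n) ∉ T := Finset.mem_compl.mp i.2
    set Y : Submodule R M := ⨆ j ∈ (Tᶜ : Finset (Fin n)).erase (i : Fin n), V j with hY
    have hYle : (⨆ (j : ↥(Tᶜ : Finset (Fin n))) (_ : j ≠ i), Submodule.map W.mkQ (V j))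
        ≤ Submodule.map W.mkQ Y := by
      refine iSup₂_le fun j hj => ?_
      refine Submodule.map_mono (le_iSup₂_of_le (j : Fin n)
        (Finset.mem_erase.mpr ⟨fun h => hj (Subtype.ext h), j.2⟩) le_rfl)
    refine Disjoint.mono_right hYle ?_
    apply disjoint_map_mkQ
    have hYW : Y ⊔ W ≤ ⨆ (j : Fin n) (_ : j ≠ (i : Fin n)), f j := by
      apply sup_le
      · refine iSup₂_le fun j hj => ?_
        obtain ⟨hne, _⟩ := Finset.mem_erase.mp hj
        exact le_iSup_of_le j (le_iSup_of_le hne inf_le_left)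
      · exact hWle _ hiT
    exact disjoint_iff.mp ((h2 (i : Fin n)).mono inf_le_left hYW)
  have hA : (((Tᶜ : Finset (Fin n)).card : ℕ) : ℕ∞) ≤ sgoldieDim R ↥A := by
    have hfam : (((Tᶜ : Finset (Fin n)).card : ℕ) : ℕ∞)
        ≤ goldieDim R ↥(Submodule.map W.mkQ A) := by
      refine le_goldieDim_submodule _ ((fun i : ↥(Tᶜ : Finset (Fin n)) =>
        Submodule.map W.mkQ (V i)) ∘ (Tᶜ : Finset (Fin n)).equivFin.symm) ?_ ?_ ?_
      · intro i; exact himg_ne _ (Finset.mem_compl.mp (Subtype.mem _))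
      · exact himg_ind.comp (Tᶜ : Finset (Fin n)).equivFin.symm.injective
      · intro i; exact himg_le _ (Finset.mem_compl.mp (Subtype.mem _))
    exact hfam.trans (goldieDim_le_sgoldieDim.trans
      (sgoldieDim_le_of_surjective _ (LinearMap.submoduleMap_surjective W.mkQ A)))
  have hcard : T.card + (Tᶜ : Finset (Fin n)).card = n := by
    have h1' : T.card ≤ Fintype.card (Fin n) := Finset.card_le_univ T
    rw [Finset.card_compl, Fintype.card_fin] at *
    omega
  calc (n : ℕ∞) = (T.card : ℕ∞) + ((Tᶜ : Finset (Fin n)).card : ℕ∞) := by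
        rw [← Nat.cast_add, hcard]
    _ ≤ sgoldieDim R ↥B + sgoldieDim R ↥A := add_le_add hB hA
    _ = sgoldieDim R ↥A + sgoldieDim R ↥B := add_comm _ _

end core

/-- For submodules A, B of M, SG.dim(A + B) ≤ SG.dim A + SG.dim B. -/
theorem sgoldieDim_sup_le {R M : Type*} [Ring R] [AddCommGroup M] [Module R M]
    (A B : Submodule R M) :
    sgoldieDim R ↥(A ⊔ B) ≤ sgoldieDim R ↥A + sgoldieDim R ↥B := by
  classical
  refine iSup_le fun K => ?_
  set A' : Submodule R ↥(A ⊔ B) := Submodule.comap (A ⊔ B).subtype A with hA'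
  set B' : Submodule R ↥(A ⊔ B) := Submodule.comap (A ⊔ B).subtype B with hB'
  have hsup : A' ⊔ B' = ⊤ := by
    rw [eq_top_iff]
    rintro ⟨x, hx⟩ -
    obtain ⟨a, ha, b, hb, hab⟩ := Submodule.mem_sup.mp hx
    refine Submodule.mem_sup.mpr ⟨⟨a, Submodule.mem_sup_left ha⟩, ha,
      ⟨b, Submodule.mem_sup_right hb⟩, hb, Subtype.ext hab⟩
  have hbar : Submodule.map K.mkQ A' ⊔ Submodule.map K.mkQ B' = ⊤ := by
    rw [← Submodule.map_sup, hsup, Submodule.map_top, Submodule.range_mkQ]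
  have hcore := core_sum_le hbar
  have hsA : sgoldieDim R ↥(Submodule.map K.mkQ A') ≤ sgoldieDim R ↥A := by
    have e := Submodule.comapSubtypeEquivOfLe (le_sup_left : A ≤ A ⊔ B)
    exact sgoldieDim_le_of_surjective ((K.mkQ.submoduleMap A').comp e.symm.toLinearMap)
      ((LinearMap.submoduleMap_surjective _ _).comp e.symm.surjective)
  have hsB : sgoldieDim R ↥(Submodule.map K.mkQ B') ≤ sgoldieDim R ↥B := by
    have e := Submodule.comapSubtypeEquivOfLe (le_sup_right : B ≤ A ⊔ B)
    exact sgoldieDim_le_of_surjective ((K.mkQ.submoduleMap B').comp e.symm.toLinearMap)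
      ((LinearMap.submoduleMap_surjective _ _).comp e.symm.surjective)
  exact hcore.trans (add_le_add hsA hsB)
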